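/- If v is a real sequence in D(A) that is strictly increasing (v(k) < v(k+1) for all k), then A v is strictly increasing: (A v)(l) < (A v)(l+1) for all l ≥ 0. -/

import Mathlib

open scoped BigOperators

noncomputable section

/-- Tail sum `q_l = Σ_{k ≥ l} p_k`. -/
def qtail (p : ℕ → ℝ) (l : ℕ) : ℝ := ∑' k, p (l + k)

/-- The operator `A` on real sequences: `(A v)(l) = (1/q_l) Σ_{k=l}^∞ p_k v(k)`. -/
def opAR (p : ℕ → ℝ) (v : ℕ → ℝ) : ℕ → ℝ :=
  fun l => (1 / qtail p l) * ∑' k, p (l + k) * v (l + k)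

/-- Membership in the domain `D(A) = {v : Σ_k p_k |v(k)| < ∞}` (real sequences). -/
def memDAR (p : ℕ → ℝ) (v : ℕ → ℝ) : Prop :=
  Summable fun k => p k * |v k|

/-!
`(A v)(l)` is the `p`-weighted average of `v` over `[l, ∞)`. Splitting off the first term,
it is a convex combination, with positive weights `p_l` and `q_{l+1}`, of `v(l)` and
`(A v)(l+1)`. Since `v` is strictly increasing, `v(l)` lies strictly below every later
value and hence strictly below their average `(A v)(l+1)`; so the convex combination
`(A v)(l)` lies strictly below `(A v)(l+1)` as well.
-/

section Tail

variable {G : Type*} [AddCommGroup G] [TopologicalSpace G] [IsTopologicalAddGroup G]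
  {f : ℕ → G}

lemma Summable.nat_add_left (hf : Summable f) (l : ℕ) : Summable fun k => f (l + k) := by
  simpa only [add_comm l] using (summable_nat_add_iff l).2 hf

lemma Summable.tsum_nat_add_left_eq_add [T2Space G] (hf : Summable f) (l : ℕ) :
    ∑' k, f (l + k) = f l + ∑' k, f (l + 1 + k) := by
  rw [(hf.nat_add_left l).tsum_eq_zero_add, add_zero]
  simp only [← add_assoc, add_right_comm l 1]

end Tail

section Operator

variable {p v : ℕ → ℝ}

lemma qtail_pos (hps : Summable p) (hp : ∀ k, 0 < p k) (l : ℕ) : 0 < qtail p l :=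
  (hps.nat_add_left l).tsum_pos (fun _ => (hp _).le) 0 (hp _)

lemma qtail_eq_add (hps : Summable p) (l : ℕ) : qtail p l = p l + qtail p (l + 1) :=
  hps.tsum_nat_add_left_eq_add l

lemma memDAR.summable_mul (hp : ∀ k, 0 ≤ p k) (hv : memDAR p v) :
    Summable fun k => p k * v k :=
  Summable.of_abs <| by simpa only [memDAR, abs_mul, abs_of_nonneg (hp _)] using hv

lemma qtail_mul_opAR {l : ℕ} (hq : qtail p l ≠ 0) :
    qtail p l * opAR p v l = ∑' k, p (l + k) * v (l + k) := by
  rw [opAR, ← mul_assoc, mul_one_div_cancel hq, one_mul]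

lemma opAR_eq_add (hps : Summable p) (hp : ∀ k, 0 < p k) (hv : memDAR p v) (l : ℕ) :
    opAR p v l =
      (p l * v l + qtail p (l + 1) * opAR p v (l + 1)) / (p l + qtail p (l + 1)) := by
  rw [qtail_mul_opAR (qtail_pos hps hp _).ne', ← qtail_eq_add hps,
    ← (hv.summable_mul fun k => (hp k).le).tsum_nat_add_left_eq_add, opAR, one_div_mul_eq_div]

lemma lt_opAR_succ (hps : Summable p) (hp : ∀ k, 0 < p k) (hv : memDAR p v)
    (hmono : StrictMono v) (l : ℕ) : v l < opAR p v (l + 1) := by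
  have hq := qtail_pos hps hp (l + 1)
  rw [← mul_lt_mul_iff_of_pos_left hq, qtail_mul_opAR hq.ne', qtail, ← tsum_mul_right]
  refine Summable.tsum_lt_tsum (i := 0) (fun k => ?_) ?_
    ((hps.nat_add_left _).mul_right _) ((hv.summable_mul fun k => (hp k).le).nat_add_left _)
  · exact mul_le_mul_of_nonneg_left (hmono (by omega)).le (hp _).le
  · exact mul_lt_mul_of_pos_left (hmono (by omega)) (hp _)

end Operator

/-- If `v ∈ D(A)` is a strictly increasing real sequence, then `A v` is strictly
increasing. -/
theorem opA_strictMono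
    (p : ℕ → ℝ) (hp : ∀ k, 0 < p k) (hsum : HasSum p 1)
    (v : ℕ → ℝ) (hv : memDAR p v) (hmono : ∀ k, v k < v (k + 1)) :
    ∀ l : ℕ, opAR p v l < opAR p v (l + 1) := by
  intro l
  have hlt := lt_opAR_succ hsum.summable hp hv (strictMono_nat_of_lt_succ hmono) l
  have hq := qtail_pos hsum.summable hp (l + 1)
  have hpl := hp l
  rw [opAR_eq_add hsum.summable hp hv, div_lt_iff₀ (by positivity)]
  nlinarith

end
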